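/- Let X be a real N-by-P matrix and L a real P-by-K matrix with K ≤ min(N,P). Then the minimum over N-by-K matrices Z with orthonormal columns of ||X - Z L^T||_F^2 equals the squared Bures-Wasserstein distance between X^T X and L L^T, i.e., tr(X^T X) - 2 tr(sqrt(sqrt(X^T X) L L^T sqrt(X^T X))) + tr(L L^T). -/

import Mathlib

open Matrix

noncomputable def frobSq {n p : ℕ} (A : Matrix (Fin n) (Fin p) ℝ) : ℝ := ∑ i, ∑ j, (A i j)^2

open Classical in
/-- The unique positive semidefinite square root of a PSD matrix (junk value `0` otherwise). -/
noncomputable def msqrt {p : ℕ} (M : Matrix (Fin p) (Fin p) ℝ) : Matrix (Fin p) (Fin p) ℝ :=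
  if h : M.PosSemidef then
    (h.1.eigenvectorUnitary : Matrix (Fin p) (Fin p) ℝ) * diagonal (Real.sqrt ∘ h.1.eigenvalues) *
      (star h.1.eigenvectorUnitary : Matrix (Fin p) (Fin p) ℝ) else 0

/-- Squared Bures-Wasserstein distance. -/
noncomputable def BWsq {p : ℕ} (A B : Matrix (Fin p) (Fin p) ℝ) : ℝ :=
  A.trace - 2 * (msqrt (msqrt A * B * msqrt A)).trace + B.trace

/-!
For `Z` with orthonormal columns, `‖X - Z Lᵀ‖_F² = tr(XᵀX) - 2 tr(Zᵀ M) + tr(LLᵀ)` with `M = X L`,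
so the claim is that the maximum of `tr(Zᵀ M)` over such `Z` is `tr √(MᵀM)`. The polar
decomposition `M = U √(MᵀM)`, `UᵀU = 1`, shows that `Z = U` attains it, and `tr(Zᵀ U S) ≤ tr S`
for `S ⪰ 0` is `‖(Z - U) √S‖_F² ≥ 0`. On the Bures-Wasserstein side, with `C = √(XᵀX) L` the
middle matrix is `C Cᵀ`, while `CᵀC = MᵀM`; and `tr √(C Cᵀ) = tr √(CᵀC)`, again by polar
decomposition of `C` or of `Cᵀ`.
-/

open scoped MatrixOrder ComplexOrder

theorem exists_orthonormal_norm_smul_eq {𝕜 E ι : Type*} [RCLike 𝕜] [NormedAddCommGroup E]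
    [InnerProductSpace 𝕜 E] [FiniteDimensional 𝕜 E] [Fintype ι]
    (hcard : Fintype.card ι ≤ Module.finrank 𝕜 E) {f : ι → E}
    (hf : Pairwise fun i j => inner 𝕜 (f i) (f j) = 0) :
    ∃ e : ι → E, Orthonormal 𝕜 e ∧ ∀ i, f i = (‖f i‖ : 𝕜) • e i := by
  -- pad `ι` to the dimension of `E`, so that the normalised nonzero `f i` extend to a basis
  let v : ι ⊕ Fin (Module.finrank 𝕜 E - Fintype.card ι) → E :=
    Sum.elim (fun i => (‖f i‖⁻¹ : 𝕜) • f i) 0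
  have hv : Orthonormal 𝕜 ({x | v x ≠ 0}.domRestrict v) := by
    refine ⟨?_, ?_⟩
    · rintro ⟨i | i, hi⟩
      · have hi : f i ≠ 0 := by simpa [v] using hi
        simp [v, norm_smul, hi]
      · simp [v] at hi
    · rintro ⟨i | i, hi⟩ ⟨j | j, hj⟩ hij
      · have hij : i ≠ j := fun h => hij (by simp [h])
        simp [v, inner_smul_left, inner_smul_right, hf hij]
      all_goals simp_all [v]
  obtain ⟨b, hb⟩ := hv.exists_orthonormalBasis_extension_of_card_eq (by simp; omega)
  refine ⟨b ∘ Sum.inl, b.orthonormal.comp _ Sum.inl_injective, fun i => ?_⟩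
  by_cases hi : f i = 0
  · simp [hi]
  · rw [Function.comp_apply, hb (Sum.inl i) (by simpa [v] using hi)]
    simp [v, smul_smul, hi]

theorem Matrix.PosSemidef.sqrt_eq_spectral {𝕜 n : Type*} [RCLike 𝕜] [Fintype n] [DecidableEq n]
    {A : Matrix n n 𝕜} (hA : A.PosSemidef) :
    CFC.sqrt A = (hA.1.eigenvectorUnitary : Matrix n n 𝕜) *
      diagonal (RCLike.ofReal ∘ Real.sqrt ∘ hA.1.eigenvalues) *
        star (hA.1.eigenvectorUnitary : Matrix n n 𝕜) := by
  rw [CFC.sqrt_eq_real_sqrt A hA.nonneg, cfcₙ_eq_cfc, hA.1.cfc_eq]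
  rfl

theorem Matrix.exists_polar_decomposition {m k : Type*} [Fintype m] [Fintype k] [DecidableEq k]
    (hcard : Fintype.card k ≤ Fintype.card m) (M : Matrix m k ℝ) :
    ∃ U : Matrix m k ℝ, Uᵀ * U = 1 ∧ M = U * CFC.sqrt (Mᵀ * M) := by
  have hA : (Mᵀ * M).PosSemidef := by
    simpa using posSemidef_conjTranspose_mul_self M
  set V : Matrix k k ℝ := ↑hA.1.eigenvectorUnitary
  set d : k → ℝ := hA.1.eigenvalues
  have hVV : Vᵀ * V = 1 := by
    simpa [V, star_eq_conjTranspose] using Unitary.coe_star_mul_self hA.1.eigenvectorUnitary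
  have hVV' : V * Vᵀ = 1 := by
    simpa [V, star_eq_conjTranspose] using Unitary.coe_mul_star_self hA.1.eigenvectorUnitary
  have hdiag : (M * V)ᵀ * (M * V) = diagonal d := by
    have := hA.1.conjStarAlgAut_star_eigenvectorUnitary
    rw [Unitary.conjStarAlgAut_apply] at this
    simpa [V, d, star_eq_conjTranspose, Matrix.mul_assoc] using this
  let f : k → EuclideanSpace ℝ m := fun i => WithLp.toLp 2 fun a => (M * V) a i
  have hf : ∀ i j, inner ℝ (f i) (f j) = diagonal d i j := by
    intro i j
    rw [← hdiag, EuclideanSpace.inner_eq_star_dotProduct, mul_apply, dotProduct]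
    simp [f, mul_comm]
  obtain ⟨e, he, hfe⟩ := exists_orthonormal_norm_smul_eq (𝕜 := ℝ) (by simpa using hcard)
    (f := f) fun i j hij => by simp [hf, hij]
  have hnorm : ∀ i, ‖f i‖ = √(d i) := fun i => by
    rw [norm_eq_sqrt_real_inner, hf, diagonal_apply_eq]
  let W : Matrix m k ℝ := of fun a i => e i a
  have hW : Wᵀ * W = 1 := by
    ext i j
    rw [one_apply, ← orthonormal_iff_ite.mp he i j, EuclideanSpace.inner_eq_star_dotProduct,
      mul_apply, dotProduct]
    simp [W, mul_comm]
  have hMV : M * V = W * diagonal (Real.sqrt ∘ d) := by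
    ext a i
    have := congrArg (· a) (hfe i)
    simp only [hnorm, f] at this
    simp [W, mul_diagonal, this, mul_comm]
  refine ⟨W * Vᵀ, ?_, ?_⟩
  · rw [transpose_mul, transpose_transpose, Matrix.mul_assoc, ← Matrix.mul_assoc Wᵀ, hW,
      Matrix.one_mul, hVV']
  · have hstar : star V = Vᵀ := by simp [star_eq_conjTranspose]
    have hD : (RCLike.ofReal ∘ Real.sqrt ∘ d : k → ℝ) = Real.sqrt ∘ d := rfl
    calc M = M * V * Vᵀ := by rw [Matrix.mul_assoc, hVV', Matrix.mul_one]
      _ = W * Vᵀ * (V * diagonal (Real.sqrt ∘ d) * Vᵀ) := by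
        simp only [hMV, Matrix.mul_assoc, ← Matrix.mul_assoc Vᵀ V, hVV, Matrix.one_mul]
      _ = W * Vᵀ * CFC.sqrt (Mᵀ * M) := by rw [hA.sqrt_eq_spectral, hstar, hD]

theorem Matrix.PosSemidef.trace_mul_nonneg {𝕜 n : Type*} [RCLike 𝕜] [Fintype n] [DecidableEq n]
    {E S : Matrix n n 𝕜} (hE : E.PosSemidef) (hS : S.PosSemidef) : 0 ≤ (E * S).trace := by
  set R := CFC.sqrt S
  have hR : R.PosSemidef := nonneg_iff_posSemidef.mp (CFC.sqrt_nonneg S)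
  calc 0 ≤ (Rᴴ * E * R).trace := (hE.conjTranspose_mul_mul_same R).trace_nonneg
    _ = (E * S).trace := by
      rw [hR.1.eq, trace_mul_cycle, CFC.sqrt_mul_sqrt_self S hS.nonneg, trace_mul_comm]

theorem Matrix.trace_transpose_mul_mul_le_trace {n k : Type*} [Fintype n] [Fintype k]
    [DecidableEq k] {Z Y : Matrix n k ℝ} (hZ : Zᵀ * Z = 1) (hY : Yᵀ * Y = 1)
    {S : Matrix k k ℝ} (hS : S.PosSemidef) : (Zᵀ * Y * S).trace ≤ S.trace := by
  have hnonneg := (posSemidef_conjTranspose_mul_self (Z - Y)).trace_mul_nonneg hS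
  have hswap : (Yᵀ * Z * S).trace = (Zᵀ * Y * S).trace := by
    rw [← trace_transpose, transpose_mul, transpose_mul, transpose_transpose,
      show Sᵀ = S by simpa using hS.1.eq, trace_mul_comm, Matrix.mul_assoc]
  simp only [conjTranspose_eq_transpose_of_trivial, transpose_sub, Matrix.sub_mul, Matrix.mul_sub,
    hZ, hY, trace_sub, Matrix.one_mul] at hnonneg
  linarith

theorem Matrix.trace_sqrt_mul_transpose_self_of_card_le {m k : Type*} [Fintype m] [Fintype k]
    [DecidableEq m] [DecidableEq k] (hcard : Fintype.card k ≤ Fintype.card m) (C : Matrix m k ℝ) :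
    (CFC.sqrt (C * Cᵀ)).trace = (CFC.sqrt (Cᵀ * C)).trace := by
  obtain ⟨U, hU, hC⟩ := exists_polar_decomposition hcard C
  set S := CFC.sqrt (Cᵀ * C)
  have hS : S.PosSemidef := nonneg_iff_posSemidef.mp (CFC.sqrt_nonneg _)
  have hSt : Sᵀ = S := by simpa using hS.1.eq
  have hsqrt : CFC.sqrt (C * Cᵀ) = U * S * Uᵀ := by
    have hUSU : (U * S * Uᵀ).PosSemidef := by simpa using hS.mul_mul_conjTranspose_same U
    refine CFC.sqrt_unique ?_ (nonneg_iff_posSemidef.mpr hUSU)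
    rw [hC, transpose_mul, hSt]
    simp only [Matrix.mul_assoc, ← Matrix.mul_assoc Uᵀ U, hU, Matrix.one_mul]
  rw [hsqrt, trace_mul_cycle, hU, Matrix.one_mul]

theorem Matrix.trace_sqrt_mul_transpose_self {m k : Type*} [Fintype m] [Fintype k]
    [DecidableEq m] [DecidableEq k] (C : Matrix m k ℝ) :
    (CFC.sqrt (C * Cᵀ)).trace = (CFC.sqrt (Cᵀ * C)).trace := by
  rcases le_total (Fintype.card k) (Fintype.card m) with hcard | hcard
  · exact trace_sqrt_mul_transpose_self_of_card_le hcard C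
  · simpa using (trace_sqrt_mul_transpose_self_of_card_le hcard Cᵀ).symm

theorem Matrix.isGreatest_trace_transpose_mul {m k : Type*} [Fintype m] [Fintype k]
    [DecidableEq k] (hcard : Fintype.card k ≤ Fintype.card m) (M : Matrix m k ℝ) :
    IsGreatest {t | ∃ Z : Matrix m k ℝ, Zᵀ * Z = 1 ∧ (Zᵀ * M).trace = t}
      (CFC.sqrt (Mᵀ * M)).trace := by
  obtain ⟨U, hU, hM⟩ := exists_polar_decomposition hcard M
  set S := CFC.sqrt (Mᵀ * M)
  refine ⟨⟨U, hU, by rw [hM, ← Matrix.mul_assoc, hU, Matrix.one_mul]⟩, ?_⟩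
  rintro _ ⟨Z, hZ, rfl⟩
  rw [hM, ← Matrix.mul_assoc]
  exact trace_transpose_mul_mul_le_trace hZ hU (nonneg_iff_posSemidef.mp (CFC.sqrt_nonneg _))

-- No positivity hypothesis: off the PSD cone both sides are the junk value `0`.
theorem msqrt_eq_sqrt {p : ℕ} (M : Matrix (Fin p) (Fin p) ℝ) : msqrt M = CFC.sqrt M := by
  by_cases hM : M.PosSemidef
  · rw [msqrt, dif_pos hM, hM.sqrt_eq_spectral]
    rfl
  · rw [msqrt, dif_neg hM, CFC.sqrt_of_not_nonneg (by rwa [nonneg_iff_posSemidef])]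

theorem frobSq_eq_trace {n p : ℕ} (A : Matrix (Fin n) (Fin p) ℝ) : frobSq A = (Aᵀ * A).trace := by
  simp only [frobSq, trace, diag_apply, mul_apply, transpose_apply, sq]
  exact Finset.sum_comm

theorem frobSq_sub_mul_transpose {N P K : ℕ} (X : Matrix (Fin N) (Fin P) ℝ)
    (L : Matrix (Fin P) (Fin K) ℝ) {Z : Matrix (Fin N) (Fin K) ℝ} (hZ : Zᵀ * Z = 1) :
    frobSq (X - Z * Lᵀ) = (Xᵀ * X).trace - 2 * (Zᵀ * (X * L)).trace + (L * Lᵀ).trace := by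
  have hcross' : (L * Zᵀ * X).trace = (Zᵀ * (X * L)).trace := by
    rw [trace_mul_cycle, trace_mul_comm]
  have hcross : (Xᵀ * (Z * Lᵀ)).trace = (Zᵀ * (X * L)).trace := by
    rw [← trace_transpose, transpose_mul, transpose_mul, transpose_transpose, transpose_transpose,
      ← hcross']
  have hquad : L * Zᵀ * (Z * Lᵀ) = L * Lᵀ := by
    rw [Matrix.mul_assoc, ← Matrix.mul_assoc Zᵀ, hZ, Matrix.one_mul]
  rw [frobSq_eq_trace, transpose_sub, transpose_mul, transpose_transpose, Matrix.sub_mul,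
    Matrix.mul_sub, Matrix.mul_sub, hquad, trace_sub, trace_sub, trace_sub, hcross, hcross']
  ring

theorem BWsq_transpose_mul_self {N P K : ℕ} (X : Matrix (Fin N) (Fin P) ℝ)
    (L : Matrix (Fin P) (Fin K) ℝ) :
    BWsq (Xᵀ * X) (L * Lᵀ) =
      (Xᵀ * X).trace - 2 * (CFC.sqrt ((X * L)ᵀ * (X * L))).trace + (L * Lᵀ).trace := by
  set R := CFC.sqrt (Xᵀ * X)
  have hR : Rᵀ = R := by simpa using (nonneg_iff_posSemidef.mp (CFC.sqrt_nonneg (Xᵀ * X))).1.eq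
  have hA : (Xᵀ * X).PosSemidef := by simpa using posSemidef_conjTranspose_mul_self X
  have hRR : R * R = Xᵀ * X := CFC.sqrt_mul_sqrt_self _ hA.nonneg
  have hmid : R * (L * Lᵀ) * R = R * L * (R * L)ᵀ := by
    rw [transpose_mul, hR]
    simp only [Matrix.mul_assoc]
  have hgram : (R * L)ᵀ * (R * L) = (X * L)ᵀ * (X * L) := by
    rw [transpose_mul, transpose_mul, hR, Matrix.mul_assoc, ← Matrix.mul_assoc R, hRR,
      Matrix.mul_assoc Lᵀ, Matrix.mul_assoc Xᵀ]
  rw [BWsq, msqrt_eq_sqrt, msqrt_eq_sqrt, hmid, trace_sqrt_mul_transpose_self, hgram]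

theorem stmt4_general {N P K : ℕ} (hKN : K ≤ N)
    (X : Matrix (Fin N) (Fin P) ℝ) (L : Matrix (Fin P) (Fin K) ℝ) :
    ∃ Z₀ : Matrix (Fin N) (Fin K) ℝ, Z₀.transpose * Z₀ = 1 ∧
      frobSq (X - Z₀ * L.transpose) = BWsq (X.transpose * X) (L * L.transpose) ∧
      ∀ Z : Matrix (Fin N) (Fin K) ℝ, Z.transpose * Z = 1 →
        BWsq (X.transpose * X) (L * L.transpose) ≤ frobSq (X - Z * L.transpose) := by
  obtain ⟨⟨Z₀, hZ₀, htrace⟩, hmax⟩ :=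
    isGreatest_trace_transpose_mul (by simpa using hKN) (X * L)
  refine ⟨Z₀, hZ₀, ?_, fun Z hZ => ?_⟩
  · rw [frobSq_sub_mul_transpose X L hZ₀, BWsq_transpose_mul_self, htrace]
  · rw [frobSq_sub_mul_transpose X L hZ, BWsq_transpose_mul_self]
    linarith [hmax ⟨Z, hZ, rfl⟩]

/-- The minimum of `‖X - Z Lᵀ‖_F²` over `Z` with orthonormal columns equals the squared
Bures-Wasserstein distance between `Xᵀ X` and `L Lᵀ`. -/
theorem stmt4 {N P K : ℕ} (hKN : K ≤ N) (hKP : K ≤ P)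
    (X : Matrix (Fin N) (Fin P) ℝ) (L : Matrix (Fin P) (Fin K) ℝ) :
    ∃ Z₀ : Matrix (Fin N) (Fin K) ℝ, Z₀.transpose * Z₀ = 1 ∧
      frobSq (X - Z₀ * L.transpose) = BWsq (X.transpose * X) (L * L.transpose) ∧
      ∀ Z : Matrix (Fin N) (Fin K) ℝ, Z.transpose * Z = 1 →
        BWsq (X.transpose * X) (L * L.transpose) ≤ frobSq (X - Z * L.transpose) :=
  stmt4_general hKN X L
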